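/- In the EXPTIME-hardness construction, the equality-test gadget succeeds exactly on duplicated tapes: a category [π;−] / [a_1] ⋯ / [a_m] / [b_1] ⋯ / [b_m] is derivable (via the chain of categories [π=1], …, [π=m]) from [π;+] / [a_1] ⋯ / [a_m] / [b_1] ⋯ / [b_m] if and only if a_i = b_i for all 1 ≤ i ≤ m. -/
import Mathlib



/-- Categories of VW-CCG over atomic categories coded by natural numbers.
`slash d X Y` is `X /ᵈ Y` where `d = true` is a forward slash `/` and
`d = false` is a backward slash `\`. -/
inductive Cat : Type where
  | atom : ℕ → Cat
  | slash : Bool → Cat → Cat → Cat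
deriving DecidableEq

namespace Cat

/-- The target (innermost atomic category). -/
def target : Cat → ℕ
  | atom a => a
  | slash _ X _ => X.target

/-- The argument stack of a category, bottom of the stack first. -/
def args : Cat → List (Bool × Cat)
  | atom _ => []
  | slash d X Y => X.args ++ [(d, Y)]

/-- The number of arguments of a category. -/
def numArgs (X : Cat) : ℕ := X.args.length

/-- The size (number of symbols) of a category. -/
def size : Cat → ℕ
  | atom _ => 1
  | slash _ X Y => X.size + Y.size + 1

/-- `ArgOccurs p X` holds if the slash–category pair `p` occurs as an
argument somewhere inside the category `X`. -/
def ArgOccurs (p : Bool × Cat) : Cat → Prop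
  | atom _ => False
  | slash d X Y => (d, Y) = p ∨ ArgOccurs p X ∨ ArgOccurs p Y

end Cat

/-- Build `A /₁ X₁ ⋯ /ₘ Xₘ` from a target and an argument list. -/
def Cat.mk' (t : ℕ) (as : List (Bool × Cat)) : Cat :=
  as.foldl (fun c p => Cat.slash p.1 c p.2) (Cat.atom t)

/-- Push additional arguments on the stack of a category. -/
def appendArgs (X : Cat) (zs : List (Bool × Cat)) : Cat :=
  zs.foldl (fun c p => Cat.slash p.1 c p.2) X

/-- A VW-CCG combinatory rule: a (forward or backward) combinatory schema of
degree `zRestr.length`, optionally restricting the target of the variable `X`,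
the category `Y`, and the slashes and categories of the arguments
`/₁ Z₁ ⋯ /_d Z_d` of the secondary input. -/
structure Rule where
  fwd : Bool
  tRestr : Option ℕ
  yRestr : Option Cat
  zRestr : List (Bool × Option Cat)

/-- The degree of a rule. -/
def Rule.degree (r : Rule) : ℕ := r.zRestr.length

/-- `r.Inst L R O` holds if `L R ⇛ O` is a ground instance of the rule `r`:
forward: `X/Y  Y/₁Z₁⋯/_dZ_d ⇛ X/₁Z₁⋯/_dZ_d`;
backward: `Y/₁Z₁⋯/_dZ_d  X\Y ⇛ X/₁Z₁⋯/_dZ_d`, respecting the restrictions. -/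
def Rule.Inst (r : Rule) (L R O : Cat) : Prop :=
  ∃ (X Y : Cat) (zs : List (Bool × Cat)),
    (∀ t, r.tRestr = some t → X.target = t) ∧
    (∀ Y', r.yRestr = some Y' → Y = Y') ∧
    List.Forall₂ (fun (p : Bool × Option Cat) (z : Bool × Cat) =>
      z.1 = p.1 ∧ ∀ Z, p.2 = some Z → z.2 = Z) r.zRestr zs ∧
    O = appendArgs X zs ∧
    (if r.fwd then L = Cat.slash true X Y ∧ R = appendArgs Y zs
     else R = Cat.slash false X Y ∧ L = appendArgs Y zs)

/-- A VW-CCG grammar: a finite lexicon assigning categories to vocabulary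
symbols (coded by naturals) or to the empty string (`none`), a finite set of
combinatory rules, and a distinguished atomic category. -/
structure Grammar where
  lex : List (Option ℕ × Cat)
  rules : List Rule
  start : ℕ

/-- A grammar is ε-free if no lexicon entry is for the empty string. -/
def Grammar.EpsFree (G : Grammar) : Prop := ∀ e ∈ G.lex, e.1 ≠ none

/-- Derivation trees: leaves carry lexicon entries (`none` = empty string),
internal nodes carry categories and have exactly two children. -/
inductive DTree where
  | leaf : Option ℕ → Cat → DTree
  | node : Cat → DTree → DTree → DTree

namespace DTree

/-- The category at the root. -/
def top : DTree → Cat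
  | leaf _ X => X
  | node X _ _ => X

/-- The yield: left-to-right concatenation of the symbols at the leaves. -/
def yield : DTree → List ℕ
  | leaf none _ => []
  | leaf (some σ) _ => [σ]
  | node _ l r => l.yield ++ r.yield

/-- The total number of nodes. -/
def nodes : DTree → ℕ
  | leaf _ _ => 1
  | node _ l r => l.nodes + r.nodes + 1

/-- `τ.Valid G`: `τ` is a derivation tree of the grammar `G`. -/
def Valid (G : Grammar) : DTree → Prop
  | leaf σ X => (σ, X) ∈ G.lex
  | node X l r => Valid G l ∧ Valid G r ∧ ∃ rl ∈ G.rules, rl.Inst l.top r.top X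

/-- `τ.CatAt C`: the category `C` labels some node of `τ`. -/
def CatAt : DTree → Cat → Prop
  | leaf _ X, C => C = X
  | node X l r, C => C = X ∨ l.CatAt C ∨ r.CatAt C

end DTree

/-- The language generated by a grammar. -/
def Grammar.Lang (G : Grammar) : Set (List ℕ) :=
  { w | ∃ τ : DTree, τ.Valid G ∧ τ.top = Cat.atom G.start ∧ τ.yield = w }

/-- Categories derivable from (ε-)lexicon entries alone. -/
inductive Grammar.Derivable (G : Grammar) : Cat → Prop
  | lex {σ X} : (σ, X) ∈ G.lex → Grammar.Derivable G X
  | comb {L R O : Cat} {r : Rule} : Grammar.Derivable G L → Grammar.Derivable G R →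
      r ∈ G.rules → r.Inst L R O → Grammar.Derivable G O

/-- `G.DerivesFrom A C`: `C` is derivable from a single distinguished leaf
carrying the category `A`, all other leaves being lexicon entries. -/
inductive Grammar.DerivesFrom (G : Grammar) (A : Cat) : Cat → Prop
  | refl : Grammar.DerivesFrom G A A
  | combL {L R O : Cat} {r : Rule} : Grammar.DerivesFrom G A L → Grammar.Derivable G R →
      r ∈ G.rules → r.Inst L R O → Grammar.DerivesFrom G A O
  | combR {L R O : Cat} {r : Rule} : Grammar.Derivable G L → Grammar.DerivesFrom G A R →
      r ∈ G.rules → r.Inst L R O → Grammar.DerivesFrom G A O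

/-! Atomic categories of the equality-test gadget: `0` is `[π;−]`, `1` is
`[π;+]`, `aEq i` is `[π=i]`, and `aSym m b` is the atomic category `[b]`
for the tape symbol `b`. -/

def aEq (i : ℕ) : ℕ := 1 + i
def aSym (m b : ℕ) : ℕ := m + 2 + b

/-- `k` unrestricted forward slash–variable pairs. -/
def freeZ (k : ℕ) : List (Bool × Option Cat) := List.replicate k (true, none)

/-- The pattern `η_{i,b}`: `2m` forward slash–variable pairs with positions
`i` and `m+i` (1-based) fixed to the atomic category `[b]`. -/
def eta (m i b : ℕ) : List (Bool × Option Cat) :=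
  (List.range (2 * m)).map fun k =>
    (true, if k = i - 1 ∨ k = m + i - 1 then some (Cat.atom (aSym m b)) else none)

/-- The equality-test gadget grammar, for tape length `m` and tape symbols
`syms`. -/
def gadget (m : ℕ) (syms : List ℕ) : Grammar where
  lex :=
    (none, Cat.slash true (Cat.atom 0) (Cat.atom (aEq 1))) ::
    (((List.range (m - 1)).map fun i =>
        (none, Cat.slash true (Cat.atom (aEq (i + 1))) (Cat.atom (aEq (i + 2))))) ++
     [(none, Cat.slash true (Cat.atom (aEq m)) (Cat.atom 1))])
  rules :=
    ⟨true, some 0, some (Cat.atom (aEq 1)), freeZ (2 * m)⟩ ::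
    ((syms.flatMap fun b => (List.range (m - 1)).map fun i =>
        ⟨true, some (aEq (i + 1)), some (Cat.atom (aEq (i + 2))), eta m (i + 1) b⟩) ++
     (syms.map fun b => ⟨true, some (aEq m), some (Cat.atom 1), eta m m b⟩))
  start := 0


namespace EqGadget

lemma appendArgs_cons (X : Cat) (p : Bool × Cat) (t : List (Bool × Cat)) :
    appendArgs X (p :: t) = appendArgs (Cat.slash p.1 X p.2) t := rfl

lemma appendArgs_args (zs : List (Bool × Cat)) (X : Cat) :
    (appendArgs X zs).args = X.args ++ zs := by
  induction zs generalizing X with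
  | nil => simp [appendArgs]
  | cons p t ih => rw [appendArgs_cons, ih]; simp [Cat.args]

lemma appendArgs_target (zs : List (Bool × Cat)) (X : Cat) :
    (appendArgs X zs).target = X.target := by
  induction zs generalizing X with
  | nil => rfl
  | cons p t ih => rw [appendArgs_cons, ih]; rfl

lemma mk'_eq (t : ℕ) (zs : List (Bool × Cat)) :
    Cat.mk' t zs = appendArgs (Cat.atom t) zs := rfl

lemma mk'_args (t : ℕ) (zs : List (Bool × Cat)) : (Cat.mk' t zs).args = zs := by
  rw [mk'_eq, appendArgs_args]; simp [Cat.args]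

lemma mk'_target (t : ℕ) (zs : List (Bool × Cat)) : (Cat.mk' t zs).target = t := by
  rw [mk'_eq, appendArgs_target]; rfl

lemma mk'_inj {t t' : ℕ} {zs zs' : List (Bool × Cat)}
    (h : Cat.mk' t zs = Cat.mk' t' zs') : t = t' ∧ zs = zs' := by
  constructor
  · have := congrArg Cat.target h; rwa [mk'_target, mk'_target] at this
  · have := congrArg Cat.args h; rwa [mk'_args, mk'_args] at this

/-- The duplicated-tape argument stack. -/
def zsOf {m : ℕ} (a b : Fin m → ℕ) : List (Bool × Cat) :=
  (List.ofFn fun i => (true, Cat.atom (aSym m (a i)))) ++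
  (List.ofFn fun i => (true, Cat.atom (aSym m (b i))))

lemma zsOf_length {m : ℕ} (a b : Fin m → ℕ) : (zsOf a b).length = 2 * m := by
  simp [zsOf]; ring

lemma zsOf_get {m : ℕ} (a b : Fin m → ℕ) (k : ℕ) (hk : k < (zsOf a b).length) :
    (zsOf a b)[k] =
      if h : k < m then (true, Cat.atom (aSym m (a ⟨k, h⟩)))
      else (true, Cat.atom (aSym m (b ⟨k - m, by rw [zsOf_length] at hk; omega⟩))) := by
  simp only [zsOf, List.getElem_append, List.length_ofFn, List.getElem_ofFn]

/-- The matching condition used in `Rule.Inst`. -/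
def Match (p : Bool × Option Cat) (z : Bool × Cat) : Prop :=
  z.1 = p.1 ∧ ∀ Z, p.2 = some Z → z.2 = Z

lemma eta_length (m i c : ℕ) : (eta m i c).length = 2 * m := by simp [eta]

lemma eta_get (m i c k : ℕ) (hk : k < (eta m i c).length) :
    (eta m i c)[k] =
      (true, if k = i - 1 ∨ k = m + i - 1 then some (Cat.atom (aSym m c)) else none) := by
  rw [eta_length] at hk; simp [eta, List.getElem_map, List.getElem_range, hk]

lemma freeZ_length (k : ℕ) : (freeZ k).length = k := by simp [freeZ]

lemma freeZ_sat {m : ℕ} (a b : Fin m → ℕ) :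
    List.Forall₂ Match (freeZ (2 * m)) (zsOf a b) := by
  rw [List.forall₂_iff_get]
  refine ⟨by rw [freeZ_length, zsOf_length], fun k h1 h2 => ?_⟩
  simp only [List.get_eq_getElem]
  rw [zsOf_get]
  have : (freeZ (2*m))[k] = ((true, none) : Bool × Option Cat) := by
    simp [freeZ]
  rw [this]
  split <;> exact ⟨rfl, by simp⟩

lemma eta_sat {m : ℕ} (a b : Fin m → ℕ) {i : ℕ} (h1 : 1 ≤ i) (h2 : i ≤ m)
    (hab : a ⟨i - 1, by omega⟩ = b ⟨i - 1, by omega⟩) :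
    List.Forall₂ Match (eta m i (a ⟨i - 1, by omega⟩)) (zsOf a b) := by
  rw [List.forall₂_iff_get]
  refine ⟨by rw [eta_length, zsOf_length], fun k hk1 hk2 => ?_⟩
  simp only [List.get_eq_getElem]
  rw [eta_get _ _ _ _ hk1, zsOf_get]
  rw [eta_length] at hk1
  constructor
  · split <;> rfl
  · intro Z hZ
    split at hZ
    · rename_i hkor
      obtain rfl : Z = Cat.atom (aSym m (a ⟨i - 1, by omega⟩)) := by
        injection hZ.symm
      rcases hkor with rfl | rfl
      · rw [dif_pos (by omega)]
      · rw [dif_neg (by omega : ¬ m + i - 1 < m)]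
        show Cat.atom (aSym m (b ⟨m + i - 1 - m, by omega⟩)) = _
        rw [show (⟨m + i - 1 - m, by omega⟩ : Fin m) = ⟨i - 1, by omega⟩ from
          Fin.ext (show m + i - 1 - m = i - 1 by omega), ← hab]
    · exact absurd hZ (by simp)

lemma eta_constraint {m : ℕ} (a b : Fin m → ℕ) {c i : ℕ} (h1 : 1 ≤ i) (h2 : i ≤ m)
    (h : List.Forall₂ Match (eta m i c) (zsOf a b)) :
    a ⟨i - 1, by omega⟩ = c ∧ b ⟨i - 1, by omega⟩ = c := by
  rw [List.forall₂_iff_get] at h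
  obtain ⟨hlen, hget⟩ := h
  rw [eta_length, zsOf_length] at hlen
  constructor
  · have hk : i - 1 < (eta m i c).length := by rw [eta_length]; omega
    have := (hget (i - 1) hk (by rw [zsOf_length]; omega)).2 (Cat.atom (aSym m c)) ?_
    · rw [List.get_eq_getElem, zsOf_get, dif_pos (by omega : i - 1 < m)] at this
      simp only at this
      injection this with h'
      simp [aSym] at h'
      omega
    · rw [List.get_eq_getElem, eta_get _ _ _ _ hk]
      simp
  · have hk : m + i - 1 < (eta m i c).length := by rw [eta_length]; omega
    have := (hget (m + i - 1) hk (by rw [zsOf_length]; omega)).2 (Cat.atom (aSym m c)) ?_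
    · rw [List.get_eq_getElem, zsOf_get, dif_neg (by omega : ¬ m + i - 1 < m)] at this
      simp only at this
      have h4 : aSym m (b ⟨m + i - 1 - m, by omega⟩) = aSym m c := by
        injection this
      have h5 : (⟨m + i - 1 - m, by omega⟩ : Fin m) = ⟨i - 1, by omega⟩ :=
        Fin.ext (show m + i - 1 - m = i - 1 by omega)
      rw [h5] at h4
      simp [aSym] at h4
      omega
    · rw [List.get_eq_getElem, eta_get _ _ _ _ hk]
      simp

lemma lex_mem {m : ℕ} {syms : List ℕ} {σ : Option ℕ} {C : Cat}
    (h : (σ, C) ∈ (gadget m syms).lex) :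
    σ = none ∧
    (C = Cat.slash true (Cat.atom 0) (Cat.atom (aEq 1)) ∨
     (∃ i, i < m - 1 ∧ C = Cat.slash true (Cat.atom (aEq (i + 1))) (Cat.atom (aEq (i + 2)))) ∨
     C = Cat.slash true (Cat.atom (aEq m)) (Cat.atom 1)) := by
  simp [gadget] at h
  rcases h with ⟨h1, h2⟩ | ⟨i, hi, h1, h2⟩ | ⟨h1, h2⟩
  · exact ⟨by first | exact h1 | exact h1.symm,
      Or.inl (by first | exact h2 | exact h2.symm)⟩
  · exact ⟨by first | exact h1 | exact h1.symm,
      Or.inr (Or.inl ⟨i, hi, by first | exact h2 | exact h2.symm⟩)⟩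
  · exact ⟨by first | exact h1 | exact h1.symm,
      Or.inr (Or.inr (by first | exact h2 | exact h2.symm))⟩

lemma rule_mem {m : ℕ} {syms : List ℕ} {r : Rule} (hr : r ∈ (gadget m syms).rules) :
    r = ⟨true, some 0, some (Cat.atom (aEq 1)), freeZ (2 * m)⟩ ∨
    (∃ c ∈ syms, ∃ i, i < m - 1 ∧
      r = ⟨true, some (aEq (i + 1)), some (Cat.atom (aEq (i + 2))), eta m (i + 1) c⟩) ∨
    (∃ c ∈ syms, r = ⟨true, some (aEq m), some (Cat.atom 1), eta m m c⟩) := by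
  simp [gadget] at hr
  rcases hr with h | ⟨c, hc, i, hi, h⟩ | ⟨c, hc, h⟩
  · exact Or.inl (by first | exact h | exact h.symm)
  · exact Or.inr (Or.inl ⟨c, hc, i, hi, by first | exact h | exact h.symm⟩)
  · exact Or.inr (Or.inr ⟨c, hc, by first | exact h | exact h.symm⟩)

lemma rule_fwd_deg {m : ℕ} {syms : List ℕ} {r : Rule} (hr : r ∈ (gadget m syms).rules) :
    r.fwd = true ∧ r.zRestr.length = 2 * m := by
  rcases rule_mem hr with h | ⟨c, _, i, _, h⟩ | ⟨c, _, h⟩ <;> subst h <;>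
    simp [freeZ_length, eta_length]

lemma derivable_lex {m : ℕ} {syms : List ℕ} (hm : 1 ≤ m) {C : Cat}
    (h : (gadget m syms).Derivable C) : ((none : Option ℕ), C) ∈ (gadget m syms).lex := by
  induction h with
  | lex h =>
    rename_i σ X
    obtain ⟨rfl, _⟩ := lex_mem h
    exact h
  | comb hL hR hr hi ihL ihR =>
    exfalso
    obtain ⟨hfwd, hdeg⟩ := rule_fwd_deg hr
    obtain ⟨X, Y, zs, _, _, hz, _, hLR⟩ := hi
    rw [hfwd] at hLR
    simp only [if_true] at hLR
    have hlen : zs.length = 2 * m := by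
      have := List.Forall₂.length_eq hz; omega
    have h1 : ((none : Option ℕ), _) ∈ (gadget m syms).lex := ihR
    obtain ⟨_, hshape⟩ := lex_mem h1
    have hargs : Cat.args (appendArgs Y zs) = Y.args ++ zs := appendArgs_args zs Y
    rcases hshape with h' | ⟨i, _, h'⟩ | h' <;>
    · rw [hLR.2] at h'
      have h2 := congrArg Cat.args h'
      rw [hargs] at h2
      have h3 := congrArg List.length h2
      simp [Cat.args] at h3
      omega

lemma inst_mk {t u : ℕ} {zr : List (Bool × Option Cat)} {zs : List (Bool × Cat)}
    (h : List.Forall₂ Match zr zs) :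
    Rule.Inst ⟨true, some t, some (Cat.atom u), zr⟩
      (Cat.slash true (Cat.atom t) (Cat.atom u)) (Cat.mk' u zs) (Cat.mk' t zs) := by
  exact ⟨Cat.atom t, Cat.atom u, zs, by simp [Cat.target], by simp, h, rfl, ⟨rfl, rfl⟩⟩

lemma lex_mem_free {m : ℕ} {syms : List ℕ} :
    ((none : Option ℕ), Cat.slash true (Cat.atom 0) (Cat.atom (aEq 1))) ∈
      (gadget m syms).lex := List.Mem.head _

lemma lex_mem_mid {m : ℕ} {syms : List ℕ} {j : ℕ} (h1 : 1 ≤ j) (h2 : j < m) :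
    ((none : Option ℕ), Cat.slash true (Cat.atom (aEq j)) (Cat.atom (aEq (j + 1)))) ∈
      (gadget m syms).lex := by
  have e1 : j - 1 + 1 = j := by omega
  have e2 : j - 1 + 2 = j + 1 := by omega
  simp only [gadget, List.mem_cons, List.mem_append, List.mem_map, List.mem_range]
  exact Or.inr (Or.inl ⟨j - 1, by omega, by rw [e1, e2]⟩)

lemma lex_mem_last {m : ℕ} {syms : List ℕ} :
    ((none : Option ℕ), Cat.slash true (Cat.atom (aEq m)) (Cat.atom 1)) ∈
      (gadget m syms).lex := by
  simp [gadget]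

lemma rule_mem_free {m : ℕ} {syms : List ℕ} :
    (⟨true, some 0, some (Cat.atom (aEq 1)), freeZ (2 * m)⟩ : Rule) ∈
      (gadget m syms).rules := List.Mem.head _

lemma rule_mem_mid {m : ℕ} {syms : List ℕ} {c : ℕ} (hc : c ∈ syms) {j : ℕ}
    (h1 : 1 ≤ j) (h2 : j < m) :
    (⟨true, some (aEq j), some (Cat.atom (aEq (j + 1))), eta m j c⟩ : Rule) ∈
      (gadget m syms).rules := by
  have e1 : j - 1 + 1 = j := by omega
  have e2 : j - 1 + 2 = j + 1 := by omega
  simp only [gadget, List.mem_cons, List.mem_append, List.mem_flatMap, List.mem_map,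
    List.mem_range]
  exact Or.inr (Or.inl ⟨c, hc, j - 1, by omega, by rw [e1, e2]⟩)

lemma rule_mem_last {m : ℕ} {syms : List ℕ} {c : ℕ} (hc : c ∈ syms) :
    (⟨true, some (aEq m), some (Cat.atom 1), eta m m c⟩ : Rule) ∈
      (gadget m syms).rules := by
  simp only [gadget, List.mem_cons, List.mem_append, List.mem_flatMap, List.mem_map,
    List.mem_range]
  exact Or.inr (Or.inr ⟨c, hc, rfl⟩)

lemma inv_of_derives {m : ℕ} {syms : List ℕ} (hm : 1 ≤ m) (a b : Fin m → ℕ) {C : Cat}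
    (h : (gadget m syms).DerivesFrom (Cat.mk' 1 (zsOf a b)) C) :
    C = Cat.mk' 1 (zsOf a b) ∨
    (∃ j, 1 ≤ j ∧ j ≤ m ∧ C = Cat.mk' (aEq j) (zsOf a b) ∧
      ∀ i : Fin m, j ≤ i.1 + 1 → a i = b i) ∨
    (C = Cat.mk' 0 (zsOf a b) ∧ ∀ i, a i = b i) := by
  induction h with
  | refl => exact Or.inl rfl
  | @combL L R O r hA hR hr hi ih =>
    exfalso
    obtain ⟨hfwd, hdeg⟩ := rule_fwd_deg hr
    obtain ⟨X, Y, zs, _, _, hz, _, hLR⟩ := hi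
    rw [hfwd] at hLR
    simp only [if_true] at hLR
    have hlen : zs.length = 2 * m := by
      have := List.Forall₂.length_eq hz; omega
    obtain ⟨_, hshape⟩ := lex_mem (derivable_lex hm hR)
    have hargs := appendArgs_args zs Y
    rcases hshape with h' | ⟨i, _, h'⟩ | h' <;>
    · rw [hLR.2] at h'
      have h2 := congrArg Cat.args h'
      rw [hargs] at h2
      have h3 := congrArg List.length h2
      simp [Cat.args] at h3
      omega
  | @combR L R O r hL hA hr hi ih =>
    obtain ⟨X, Y, zs, htr, hyr, hz, hO, hLR⟩ := hi
    obtain ⟨hfwd, _⟩ := rule_fwd_deg hr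
    rw [hfwd] at hLR
    simp only [if_true] at hLR
    obtain ⟨hL1, hR1⟩ := hLR
    obtain ⟨_, hshape⟩ := lex_mem (derivable_lex hm hL)
    obtain ⟨t₀, u₀, rfl, rfl⟩ : ∃ t₀ u₀, X = Cat.atom t₀ ∧ Y = Cat.atom u₀ := by
      rcases hshape with h' | ⟨i, _, h'⟩ | h' <;> rw [hL1] at h' <;>
        (injection h' with _ hX hY; exact ⟨_, _, hX, hY⟩)
    clear hshape hL1 hL
    rcases rule_mem hr with rfl | ⟨c, hc, i, hilt, rfl⟩ | ⟨c, hc, rfl⟩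
    · -- the freeZ rule, from [π=1] to [π;−]
      have ht0 : t₀ = 0 := htr 0 rfl
      have hu0 : u₀ = aEq 1 := by have := hyr _ rfl; injection this
      have hR2 : R = Cat.mk' u₀ zs := hR1
      rcases ih with h' | ⟨j, hj1, hjm, h', hcon⟩ | ⟨h', _⟩
      · exfalso
        have := (mk'_inj (hR2.symm.trans h')).1
        rw [hu0] at this; simp only [aEq] at this; omega
      · obtain ⟨he, rfl⟩ := mk'_inj (hR2.symm.trans h')
        have hj : j = 1 := by rw [hu0] at he; simp only [aEq] at he; omega
        subst hj
        refine Or.inr (Or.inr ⟨?_, fun i => hcon i (by omega)⟩)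
        rw [hO, ht0]; rfl
      · exfalso
        have := (mk'_inj (hR2.symm.trans h')).1
        rw [hu0] at this; simp only [aEq] at this; omega
    · -- a middle rule, from [π=i+2] to [π=i+1]
      have ht0 : t₀ = aEq (i + 1) := htr _ rfl
      have hu0 : u₀ = aEq (i + 2) := by have := hyr _ rfl; injection this
      have hR2 : R = Cat.mk' u₀ zs := hR1
      rcases ih with h' | ⟨j, hj1, hjm, h', hcon⟩ | ⟨h', _⟩
      · exfalso
        have := (mk'_inj (hR2.symm.trans h')).1
        rw [hu0] at this; simp only [aEq] at this; omega
      · obtain ⟨he, rfl⟩ := mk'_inj (hR2.symm.trans h')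
        have hj : j = i + 2 := by rw [hu0] at he; simp only [aEq] at he; omega
        subst hj
        have hcst := eta_constraint a b (by omega : 1 ≤ i + 1) (by omega : i + 1 ≤ m) hz
        refine Or.inr (Or.inl ⟨i + 1, by omega, by omega, by rw [hO, ht0]; rfl, ?_⟩)
        intro k hk
        rcases Nat.lt_or_ge k.1 (i + 1) with hki | hki
        · have hk' : k = ⟨i + 1 - 1, by omega⟩ :=
            Fin.ext (show k.1 = i + 1 - 1 by omega)
          rw [hk']; exact hcst.1.trans hcst.2.symm
        · exact hcon k (by omega)
      · exfalso
        have := (mk'_inj (hR2.symm.trans h')).1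
        rw [hu0] at this; simp only [aEq] at this; omega
    · -- the last rule, from [π;+] to [π=m]
      have ht0 : t₀ = aEq m := htr _ rfl
      have hu0 : u₀ = 1 := by have := hyr _ rfl; injection this
      have hR2 : R = Cat.mk' u₀ zs := hR1
      rcases ih with h' | ⟨j, hj1, hjm, h', hcon⟩ | ⟨h', _⟩
      · obtain ⟨he, rfl⟩ := mk'_inj (hR2.symm.trans h')
        have hcst := eta_constraint a b hm le_rfl hz
        refine Or.inr (Or.inl ⟨m, hm, le_rfl, by rw [hO, ht0]; rfl, ?_⟩)
        intro k hk
        have hk' : k = ⟨m - 1, by omega⟩ :=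
          Fin.ext (show k.1 = m - 1 by have := k.isLt; omega)
        rw [hk']; exact hcst.1.trans hcst.2.symm
      · exfalso
        have := (mk'_inj (hR2.symm.trans h')).1
        rw [hu0] at this; simp only [aEq] at this; omega
      · exfalso
        have := (mk'_inj (hR2.symm.trans h')).1
        rw [hu0] at this; omega

lemma derives_chain {m : ℕ} {syms : List ℕ} (hm : 1 ≤ m) (a b : Fin m → ℕ)
    (ha : ∀ i, a i ∈ syms) (hab : ∀ i, a i = b i) :
    ∀ k j, j + k = m → 1 ≤ j →
      (gadget m syms).DerivesFrom (Cat.mk' 1 (zsOf a b)) (Cat.mk' (aEq j) (zsOf a b)) := by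
  intro k
  induction k with
  | zero =>
    intro j hj hj1
    obtain rfl : m = j := by omega
    exact Grammar.DerivesFrom.combR
      (Grammar.Derivable.lex lex_mem_last) Grammar.DerivesFrom.refl
      (rule_mem_last (ha ⟨m - 1, by omega⟩))
      (inst_mk (eta_sat a b hm le_rfl (hab _)))
  | succ k ih =>
    intro j hj hj1
    have hjm : j < m := by omega
    exact Grammar.DerivesFrom.combR
      (Grammar.Derivable.lex (lex_mem_mid hj1 hjm))
      (ih (j + 1) (by omega) (by omega))
      (rule_mem_mid (ha ⟨j - 1, by omega⟩) hj1 hjm)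
      (inst_mk (eta_sat a b hj1 (by omega) (hab _)))

end EqGadget

/-- The equality-test gadget succeeds exactly on duplicated tapes:
`[π;−] / [a_1] ⋯ / [a_m] / [b_1] ⋯ / [b_m]` is derivable from
`[π;+] / [a_1] ⋯ / [a_m] / [b_1] ⋯ / [b_m]` iff `a_i = b_i` for all `i`. -/
theorem equality_gadget_correct (m : ℕ) (hm : 1 ≤ m) (syms : List ℕ)
    (a b : Fin m → ℕ) (ha : ∀ i, a i ∈ syms) (hb : ∀ i, b i ∈ syms) :
    Grammar.DerivesFrom (gadget m syms)
        (Cat.mk' 1 ((List.ofFn fun i => (true, Cat.atom (aSym m (a i)))) ++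
                    (List.ofFn fun i => (true, Cat.atom (aSym m (b i))))))
        (Cat.mk' 0 ((List.ofFn fun i => (true, Cat.atom (aSym m (a i)))) ++
                    (List.ofFn fun i => (true, Cat.atom (aSym m (b i)))))) ↔
      ∀ i, a i = b i := by
  constructor
  · intro h
    have h' : (gadget m syms).DerivesFrom (Cat.mk' 1 (EqGadget.zsOf a b))
        (Cat.mk' 0 (EqGadget.zsOf a b)) := h
    rcases EqGadget.inv_of_derives hm a b h' with h0 | ⟨j, hj1, _, hC, _⟩ | ⟨_, hcon⟩
    · exfalso
      have := (EqGadget.mk'_inj h0).1; omega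
    · exfalso
      have := (EqGadget.mk'_inj hC).1; simp only [aEq] at this; omega
    · exact hcon
  · intro hab
    have h1 := EqGadget.derives_chain hm a b ha hab (m - 1) 1 (by omega) le_rfl
    exact Grammar.DerivesFrom.combR
      (Grammar.Derivable.lex EqGadget.lex_mem_free) h1
      EqGadget.rule_mem_free
      (EqGadget.inst_mk (EqGadget.freeZ_sat a b))
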